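/- arXiv:1711.05452 — 2 statements merged into one kernel-verified Lean document; each statement's English description precedes it below -/
import Mathlib

section
/- Let (K, φ) be a topological dynamical system with discrete spectrum and let q : K → L be a projection onto its maximal trivial factor. Then for every l ∈ L the fiber system (K_l, φ_l) is minimal and has discrete spectrum. -/
/-- A topological dynamical system has discrete spectrum if the linear span of the
eigenvectors of its Koopman operator with unimodular eigenvalues is dense in `C(K)`. -/
def DiscreteSpectrum {K : Type*} [TopologicalSpace K] (φ : K → K) : Prop :=
  Dense (↑(Submodule.span ℂ
    {f : C(K, ℂ) | f ≠ 0 ∧ ∃ lam : ℂ, ‖lam‖ = 1 ∧ ∀ x, f (φ x) = lam * f x}) :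
      Set C(K, ℂ))

/-- A topological dynamical system `(S, ψ)` is minimal if it has no nonempty proper closed
invariant subset. -/
def IsMinimalSystem {S : Type*} [TopologicalSpace S] (ψ : S → S) : Prop :=
  ∀ C : Set S, IsClosed C → Set.MapsTo ψ C C → C.Nonempty → C = Set.univ

/-- The restriction of `φ` to the fiber `q⁻¹ {l}`. -/
def fiberMap {K L : Type*} (φ : K → K) (q : K → L) (hinv : ∀ x, q (φ x) = q x) (l : L)
    (x : ↥(q ⁻¹' {l})) : ↥(q ⁻¹' {l}) :=
  ⟨φ ↑x, by rw [Set.mem_preimage, Set.mem_singleton_iff, hinv]; exact x.2⟩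

/-!
Take finitely many unimodular eigenfunctions `f i` with eigenvalues `λ i`. The map
`F = (f i)ᵢ : K → ℂⁿ` intertwines `φ` with the isometry `v ↦ λ * v`, whose forward orbits have
compact closure. A subsequence argument makes these orbits recurrent, so the isometry maps the
orbit closure `A` of `F x` onto itself, and `z ↦ infDist (F z) A` is a continuous invariant
function. It factors through `q`, hence vanishes at every `y` in the fiber of `x`: `F y` is a
limit of the `F (φⁿ x)`. Eigenfunctions separate the points of the compact space `K`, so they
induce its topology and `y` lies in the orbit closure of `x`; this is minimality of the fiber.
Restriction to the closed fiber is onto by Tietze, so it carries the dense span of eigenfunctions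
of `φ` onto a dense set lying in the span of eigenfunctions of `φ_l`.
-/

open Set Function Topology Metric

theorem mem_closure_of_forall_finset_restrict {ι : Type*} {π : ι → Type*}
    [∀ i, TopologicalSpace (π i)] {S : Set (∀ i, π i)} {a : ∀ i, π i}
    (h : ∀ s : Finset ι, s.restrict a ∈ closure (s.restrict '' S)) : a ∈ closure S := by
  rw [mem_closure_iff_nhds]
  intro t ht
  rw [nhds_pi, Filter.mem_pi'] at ht
  obtain ⟨s, u, hu, hst⟩ := ht
  have hnhds : (univ.pi fun i : s => u i) ∈ 𝓝 (s.restrict a) :=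
    set_pi_mem_nhds finite_univ fun i _ => hu i
  obtain ⟨_, hb, b, hbS, rfl⟩ := mem_closure_iff_nhds.1 (h s) _ hnhds
  exact ⟨b, hst fun i hi => hb ⟨i, hi⟩ trivial, hbS⟩

theorem mem_closure_of_separatesPoints_of_forall_finset {K ι Y : Type*} [TopologicalSpace K]
    [CompactSpace K] [TopologicalSpace Y] [T2Space Y] {F : ι → C(K, Y)}
    (hF : ∀ x y, x ≠ y → ∃ i, F i x ≠ F i y) {S : Set K} {y : K}
    (h : ∀ s : Finset ι, (fun i : s => F i y) ∈ closure ((fun z (i : s) => F i z) '' S)) :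
    y ∈ closure S := by
  let Φ : K → ι → Y := fun z i => F i z
  have hΦ : Injective Φ := fun a b hab => by
    by_contra hne
    obtain ⟨i, hi⟩ := hF a b hne
    exact hi (congrFun hab i)
  have hind : IsInducing Φ :=
    (Continuous.isClosedEmbedding (continuous_pi fun i => (F i).continuous) hΦ).isInducing
  rw [hind.closure_eq_preimage_closure_image]
  refine mem_closure_of_forall_finset_restrict fun s => ?_
  rw [image_image]
  exact h s

theorem exists_mem_apply_ne_of_dense_span {X : Type*} [TopologicalSpace X] [T35Space X]
    {E : Set C(X, ℂ)} (hE : Dense (Submodule.span ℂ E : Set C(X, ℂ))) {x y : X} (hxy : x ≠ y) :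
    ∃ f ∈ E, f x ≠ f y := by
  by_contra! h
  let L : C(X, ℂ) →L[ℂ] ℂ := ContinuousMap.evalCLM ℂ x - ContinuousMap.evalCLM ℂ y
  have hspan : Submodule.span ℂ E ≤ L.ker :=
    Submodule.span_le.2 fun f hf => by simp [L, h f hf]
  have hall : ∀ f : C(X, ℂ), f x = f y := by
    intro f
    have hf : f ∈ closure (L.ker : Set C(X, ℂ)) := by
      rw [(hE.mono hspan).closure_eq]; trivial
    rw [L.isClosed_ker.closure_eq] at hf
    simpa [L, sub_eq_zero] using hf
  obtain ⟨g, hg : Continuous g, hgxy⟩ := separatesPoints_continuous_of_t35Space hxy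
  exact hgxy (Complex.ofReal_injective (hall ⟨fun z => (g z : ℂ), by fun_prop⟩))

section Isometry

variable {X : Type*} [MetricSpace X] {T : X → X}

theorem Isometry.iterate (hT : Isometry T) (n : ℕ) : Isometry T^[n] := by
  induction n with
  | zero => exact isometry_id
  | succ n ih => rw [iterate_succ]; exact ih.comp hT

theorem Isometry.isCompact_closure_range_iterate [ProperSpace X] (hT : Isometry T) {p : X}
    (hp : T p = p) (v : X) : IsCompact (closure (range fun n => T^[n] v)) := by
  refine (isCompact_closedBall p (dist v p)).of_isClosed_subset isClosed_closure
    (closure_minimal (range_subset_iff.2 fun n => ?_) isClosed_closedBall)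
  rw [mem_closedBall, ← (hT.iterate n).dist_eq v p, iterate_fixed hp]

theorem Isometry.exists_pos_dist_iterate_lt (hT : Isometry T) {v : X}
    (hA : IsCompact (closure (range fun n => T^[n] v))) {ε : ℝ} (hε : 0 < ε) :
    ∃ m, 0 < m ∧ dist (T^[m] v) v < ε := by
  obtain ⟨_, -, g, hg, hlim⟩ := hA.tendsto_subseq fun n => subset_closure (mem_range_self n)
  obtain ⟨N, hN⟩ := Metric.cauchySeq_iff'.1 hlim.cauchySeq ε hε
  have hlt : g N < g (N + 1) := hg N.lt_succ_self
  refine ⟨g (N + 1) - g N, by omega, ?_⟩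
  calc dist (T^[g (N + 1) - g N] v) v
      = dist (T^[g N] (T^[g (N + 1) - g N] v)) (T^[g N] v) := ((hT.iterate _).dist_eq _ _).symm
    _ = dist (T^[g (N + 1)] v) (T^[g N] v) := by
      rw [← iterate_add_apply, Nat.add_sub_cancel' hlt.le]
    _ < ε := hN (N + 1) N.le_succ

theorem Isometry.image_closure_range_iterate (hT : Isometry T) {v : X}
    (hA : IsCompact (closure (range fun n => T^[n] v))) :
    T '' closure (range fun n => T^[n] v) = closure (range fun n => T^[n] v) := by
  have hO : MapsTo T (range fun n => T^[n] v) (range fun n => T^[n] v) := by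
    rintro _ ⟨n, rfl⟩
    exact ⟨n + 1, iterate_succ_apply' T n v⟩
  refine ((hO.closure hT.continuous).image_subset).antisymm ?_
  have hclosed : IsClosed (T '' closure (range fun n => T^[n] v)) :=
    (hA.image hT.continuous).isClosed
  refine closure_minimal (range_subset_iff.2 fun n => ?_) hclosed
  cases n with
  | succ n => exact ⟨T^[n] v, subset_closure (mem_range_self n), (iterate_succ_apply' T n v).symm⟩
  | zero =>
    rw [← hclosed.closure_eq, Metric.mem_closure_iff]
    intro ε hε
    obtain ⟨m, hm, hdist⟩ := hT.exists_pos_dist_iterate_lt hA hε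
    refine ⟨T^[m] v, ⟨T^[m - 1] v, subset_closure (mem_range_self _), ?_⟩, by rwa [dist_comm]⟩
    rw [← iterate_succ_apply' T]
    congr 1
    omega

end Isometry

theorem isometry_pi_mul {ι : Type*} [Fintype ι] {lam : ι → ℂ} (hlam : ∀ i, ‖lam i‖ = 1) :
    Isometry (fun (v : ι → ℂ) i => lam i * v i) :=
  Isometry.piMap (fun i z => lam i * z) fun i => Isometry.of_dist_eq fun a b => by
    rw [dist_eq_norm, dist_eq_norm, ← mul_sub, norm_mul, hlam, one_mul]

theorem mem_closure_range_iterate_of_semiconj {K X : Type*} [TopologicalSpace K] [MetricSpace X]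
    {φ : K → K} {F : K → X} (hF : Continuous F) {T : X → X} (hT : Isometry T)
    (hFT : Semiconj F φ T) {x y : K} (hxy : ∀ f : C(K, ℂ), (∀ z, f (φ z) = f z) → f x = f y)
    (hA : IsCompact (closure (range fun n => T^[n] (F x)))) :
    F y ∈ closure (range fun n => T^[n] (F x)) := by
  set A := closure (range fun n => T^[n] (F x))
  have hTA : T '' A = A := hT.image_closure_range_iterate hA
  let h : C(K, ℂ) := ⟨fun z => (infDist (F z) A : ℂ), by fun_prop⟩
  have hinv : ∀ z, h (φ z) = h z := fun z => by
    simp only [h, ContinuousMap.coe_mk, hFT z]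
    rw [← hTA, infDist_image hT, hTA]
  have hxA : F x ∈ A := subset_closure ⟨0, rfl⟩
  have hx : infDist (F x) A = 0 := infDist_zero_of_mem hxA
  have hy : infDist (F y) A = 0 := by
    have hxy' := hxy h hinv
    simp only [h, ContinuousMap.coe_mk, Complex.ofReal_inj] at hxy'
    rw [← hxy', hx]
  exact (isClosed_closure.mem_iff_infDist_zero ⟨F x, hxA⟩).2 hy

theorem DiscreteSpectrum.mem_closure_range_iterate {K : Type*} [TopologicalSpace K]
    [CompactSpace K] [T2Space K] {φ : K → K} (hds : DiscreteSpectrum φ) {x y : K}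
    (hxy : ∀ f : C(K, ℂ), (∀ z, f (φ z) = f z) → f x = f y) :
    y ∈ closure (range fun n => φ^[n] x) := by
  set E := {f : C(K, ℂ) | f ≠ 0 ∧ ∃ lam : ℂ, ‖lam‖ = 1 ∧ ∀ x, f (φ x) = lam * f x}
  refine mem_closure_of_separatesPoints_of_forall_finset (F := ((↑) : E → C(K, ℂ)))
    (fun a b hab => ?_) fun s => ?_
  · obtain ⟨f, hf, hfab⟩ := exists_mem_apply_ne_of_dense_span hds hab
    exact ⟨⟨f, hf⟩, hfab⟩
  choose lam hlam heig using fun f : s => f.1.2.2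
  set F : K → s → ℂ := fun z f => (f : C(K, ℂ)) z
  set T : (s → ℂ) → s → ℂ := fun v f => lam f * v f
  have hT : Isometry T := isometry_pi_mul hlam
  have hFT : Semiconj F φ T := fun z => funext fun f => heig f z
  have hF : Continuous F := continuous_pi fun f => (f : C(K, ℂ)).continuous
  have horbit : F ∘ (fun n => φ^[n] x) = fun n => T^[n] (F x) :=
    funext fun n => hFT.iterate_right n x
  rw [← range_comp, horbit]
  exact mem_closure_range_iterate_of_semiconj hF hT hFT hxy
    (hT.isCompact_closure_range_iterate (p := 0) (funext fun f => mul_zero _) _)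

theorem isMinimalSystem_of_forall_mem_closure_range_iterate {S : Type*} [TopologicalSpace S]
    {ψ : S → S} (h : ∀ x y : S, y ∈ closure (range fun n => ψ^[n] x)) : IsMinimalSystem ψ := by
  rintro C hC hψC ⟨x, hx⟩
  exact eq_univ_of_forall fun y =>
    closure_minimal (range_subset_iff.2 fun n => hψC.iterate n hx) hC (h x y)

theorem mem_closure_range_iterate_subtype {K : Type*} [TopologicalSpace K] {φ : K → K}
    {P : Set K} {ψ : P → P} (hψ : ∀ x, (ψ x : K) = φ x) {x y : P}
    (h : (y : K) ∈ closure (range fun n => φ^[n] x)) : y ∈ closure (range fun n => ψ^[n] x) := by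
  have horbit : (↑) ∘ (fun n => ψ^[n] x) = fun n => φ^[n] x :=
    funext fun n => Semiconj.iterate_right (f := ((↑) : P → K)) hψ n x
  rwa [closure_subtype, ← range_comp, horbit]

theorem DiscreteSpectrum.restrict {K : Type*} [TopologicalSpace K] [NormalSpace K] {φ : K → K}
    (hds : DiscreteSpectrum φ) {P : Set K} (hP : IsClosed P) {ψ : P → P}
    (hψ : ∀ x, (ψ x : K) = φ x) : DiscreteSpectrum ψ := by
  let R : C(K, ℂ) →L[ℂ] C(P, ℂ) := ContinuousMap.compCLM ℂ ℂ ((ContinuousMap.id K).restrict P)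
  have hR : Surjective R := fun g => ContinuousMap.exists_restrict_eq hP g
  refine (hR.denseRange.dense_image R.continuous hds).mono
    ((Submodule.image_span_subset R.toLinearMap _ _).2 ?_)
  rintro f ⟨-, lam, hlam, hf⟩
  by_cases h0 : R f = 0
  · simp [h0]
  · exact Submodule.subset_span ⟨h0, lam, hlam, fun z => by simp [R, hψ, hf]⟩

theorem fibers_minimal_and_discreteSpectrum_general
    {K L : Type*} [TopologicalSpace K] [CompactSpace K] [T2Space K]
    [TopologicalSpace L] [T2Space L]
    (φ : K → K) (hds : DiscreteSpectrum φ)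
    (q : K → L) (hq : Continuous q)
    (hinv : ∀ x, q (φ x) = q x)
    (hmax : ∀ f : C(K, ℂ), (∀ x, f (φ x) = f x) ↔ ∃ g : C(L, ℂ), f = g.comp ⟨q, hq⟩) :
    ∀ l : L, IsMinimalSystem (fiberMap φ q hinv l) ∧ DiscreteSpectrum (fiberMap φ q hinv l) := by
  intro l
  have hfiber : ∀ x, (fiberMap φ q hinv l x : K) = φ x := fun _ => rfl
  refine ⟨isMinimalSystem_of_forall_mem_closure_range_iterate fun x y =>
    mem_closure_range_iterate_subtype hfiber (hds.mem_closure_range_iterate fun f hf => ?_),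
    hds.restrict (isClosed_singleton.preimage hq) hfiber⟩
  obtain ⟨g, rfl⟩ := (hmax f).1 hf
  change g (q x) = g (q y)
  rw [show q x = l from x.2, show q y = l from y.2]

/-- Let `(K, φ)` be a topological dynamical system with discrete spectrum
and `q : K → L` a projection onto its maximal trivial factor.  Then every fiber system
`(K_l, φ_l)` is minimal and has discrete spectrum. -/
theorem fibers_minimal_and_discreteSpectrum
    {K L : Type*} [TopologicalSpace K] [CompactSpace K] [T2Space K]
    [TopologicalSpace L] [CompactSpace L] [T2Space L]
    (φ : K → K) (hφ : Continuous φ) (hds : DiscreteSpectrum φ)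
    (q : K → L) (hq : Continuous q) (hqsurj : Function.Surjective q)
    (hinv : ∀ x, q (φ x) = q x)
    (hmax : ∀ f : C(K, ℂ), (∀ x, f (φ x) = f x) ↔ ∃ g : C(L, ℂ), f = g.comp ⟨q, hq⟩) :
    ∀ l : L, IsMinimalSystem (fiberMap φ q hinv l) ∧ DiscreteSpectrum (fiberMap φ q hinv l) :=
  fibers_minimal_and_discreteSpectrum_general φ hds q hq hinv hmax
end

section
/- Let (K, φ) be a topological dynamical system with discrete spectrum, q : K → L a projection onto its maximal trivial factor, l ∈ L, λ ∈ ℂ with |λ| = 1, and let f ∈ C(K_l) be a nonzero continuous function on the fiber K_l with f ∘ φ_l = λ f. Then there exists f̃ ∈ C(K) with f̃ ∘ φ = λ f̃ and f̃|_{K_l} = f. Consequently, there is an open neighborhood U of l in L such that for every l' ∈ U, λ is an eigenvalue of the Koopman operator of the fiber system (K_{l'}, φ_{l'}); i.e., the point spectrum bundle of (K, φ) is lower-semicontinuous. -/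
/-!
Extend `f` to some `F ∈ C(K)` by Tietze and average it along orbits, twisted by `λ⁻¹`:
`A_N F = N⁻¹ ∑_{n<N} λ⁻ⁿ F ∘ φⁿ`. For the contraction `S F = λ⁻¹ F ∘ φ` these averages converge
on every eigenvector, and the set where they converge is a closed subspace, hence all of `C(K)`
by discrete spectrum. The limit is fixed by `S`, i.e. a `λ`-eigenfunction, and it agrees with `f`
on `K_l` because every `A_N F` does. Its modulus is `φ`-invariant, hence of the form `g ∘ q`, and
`λ` is an eigenvalue on each fiber over the open neighbourhood `{g ≠ 0}` of `l`.
-/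

open Filter Topology Function

theorem Equicontinuous.isClosed_setOf_cauchySeq {ι X Y : Type*} [Nonempty ι] [SemilatticeSup ι]
    [TopologicalSpace X] [PseudoMetricSpace Y] {F : ι → X → Y} (hF : Equicontinuous F) :
    IsClosed {x | CauchySeq (F · x)} := by
  refine isClosed_of_closure_subset fun x hx => Metric.cauchySeq_iff'.2 fun ε hε => ?_
  obtain ⟨y, hy, hxy⟩ := ((mem_closure_iff_frequently.1 hx).and_eventually
    (Metric.equicontinuousAt_iff_right.1 (hF x) (ε / 3) (by positivity))).exists
  obtain ⟨N, hN⟩ := Metric.cauchySeq_iff'.1 hy (ε / 3) (by positivity)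
  refine ⟨N, fun n hn => ?_⟩
  calc dist (F n x) (F N x)
      ≤ dist (F n x) (F n y) + dist (F n y) (F N y) + dist (F N y) (F N x) := dist_triangle4 ..
    _ < ε / 3 + ε / 3 + ε / 3 := by
        gcongr
        · exact hxy n
        · exact hN n hn
        · rw [dist_comm]; exact hxy N
    _ = ε := by ring

namespace LinearMap

variable {𝕜 E : Type*} [RCLike 𝕜] [NormedAddCommGroup E] [NormedSpace 𝕜 E] (S : E →ₗ[𝕜] E)

theorem birkhoffAverage_id_eq (N : ℕ) :
    birkhoffAverage 𝕜 S _root_.id N = ⇑((N : 𝕜)⁻¹ • ∑ k ∈ Finset.range N, S ^ k) := by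
  ext x
  simp [birkhoffAverage, birkhoffSum, LinearMap.sum_apply, Module.End.pow_apply]

def birkhoffConvergent : Submodule 𝕜 E where
  carrier := {x | ∃ w, Tendsto (birkhoffAverage 𝕜 S _root_.id · x) atTop (𝓝 w)}
  zero_mem' := ⟨0, by simpa only [S.birkhoffAverage_id_eq, map_zero] using tendsto_const_nhds⟩
  add_mem' := by
    rintro x y ⟨v, hv⟩ ⟨w, hw⟩
    exact ⟨v + w, by simpa only [S.birkhoffAverage_id_eq, map_add] using hv.add hw⟩
  smul_mem' := by
    rintro c x ⟨w, hw⟩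
    exact ⟨c • w, by simpa only [S.birkhoffAverage_id_eq, map_smul] using hw.const_smul c⟩

variable {S}

theorem tendsto_birkhoffAverage_apply_sub (hS : LipschitzWith 1 S) (x : E) :
    Tendsto (fun N => birkhoffAverage 𝕜 S _root_.id N (S x) - birkhoffAverage 𝕜 S _root_.id N x)
      atTop (𝓝 0) := by
  refine tendsto_birkhoffAverage_apply_sub_birkhoffAverage 𝕜 <|
    isBounded_iff_forall_norm_le.2 ⟨‖x‖, Set.forall_mem_range.2 fun n => ?_⟩
  simpa [iterate_map_zero] using (hS.iterate n).dist_le_mul x 0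

theorem mem_birkhoffConvergent_of_apply_eq_smul (hS : LipschitzWith 1 S) {μ : 𝕜} {v : E}
    (hv : S v = μ • v) : v ∈ S.birkhoffConvergent := by
  rcases eq_or_ne μ 1 with rfl | hμ
  · have hfix : IsFixedPt S v := by simpa [IsFixedPt] using hv
    exact ⟨v, hfix.tendsto_birkhoffAverage 𝕜 _root_.id⟩
  · have hsub : ∀ N, birkhoffAverage 𝕜 S _root_.id N (S v) - birkhoffAverage 𝕜 S _root_.id N v
        = (μ - 1) • birkhoffAverage 𝕜 S _root_.id N v := fun N => by
      rw [hv, S.birkhoffAverage_id_eq, map_smul, sub_smul, one_smul]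
    refine ⟨0, ?_⟩
    simpa [hsub, smul_smul, inv_mul_cancel₀ (sub_ne_zero.2 hμ)]
      using (S.tendsto_birkhoffAverage_apply_sub hS v).const_smul (μ - 1)⁻¹

theorem isClosed_birkhoffConvergent [CompleteSpace E] (hS : LipschitzWith 1 S) :
    IsClosed (S.birkhoffConvergent : Set E) := by
  have : (S.birkhoffConvergent : Set E) = {x | CauchySeq (birkhoffAverage 𝕜 S _root_.id · x)} :=
    Set.ext fun x => ⟨fun ⟨_, hw⟩ => hw.cauchySeq, cauchySeq_tendsto_of_complete⟩
  rw [this]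
  exact (uniformEquicontinuous_birkhoffAverage 𝕜 hS uniformContinuous_id).equicontinuous
    |>.isClosed_setOf_cauchySeq

theorem apply_eq_of_tendsto_birkhoffAverage (hS : LipschitzWith 1 S) {x w : E}
    (h : Tendsto (birkhoffAverage 𝕜 S _root_.id · x) atTop (𝓝 w)) : S w = w := by
  have hcomm : ∀ N,
      S (birkhoffAverage 𝕜 S _root_.id N x) = birkhoffAverage 𝕜 S _root_.id N (S x) := by
    intro N
    rw [S.birkhoffAverage_id_eq]
    exact LinearMap.congr_fun
      ((Commute.sum_right _ _ _ fun k _ => Commute.self_pow S k).smul_right _).eq x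
  refine tendsto_nhds_unique ((hS.continuous.tendsto w).comp h) ?_
  simpa [comp_def, hcomm] using (S.tendsto_birkhoffAverage_apply_sub hS x).add h

end LinearMap

section Koopman

variable {K : Type*} [TopologicalSpace K]

noncomputable def twistedKoopman (φ : C(K, K)) (c : ℂ) : C(K, ℂ) →ₗ[ℂ] C(K, ℂ) :=
  c • (ContinuousMap.compRightAlgHom ℂ ℂ φ).toLinearMap

@[simp]
theorem twistedKoopman_apply (φ : C(K, K)) (c : ℂ) (F : C(K, ℂ)) (x : K) :
    twistedKoopman φ c F x = c * F (φ x) :=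
  rfl

theorem lipschitzWith_twistedKoopman [CompactSpace K] (φ : C(K, K)) {c : ℂ} (hc : ‖c‖ ≤ 1) :
    LipschitzWith 1 (twistedKoopman φ c) :=
  AddMonoidHomClass.lipschitz_of_bound_nnnorm _ 1 fun F => by
    rw [one_mul, ← NNReal.coe_le_coe, coe_nnnorm, coe_nnnorm]
    refine (ContinuousMap.norm_le _ (norm_nonneg F)).2 fun x => ?_
    rw [twistedKoopman_apply, norm_mul]
    exact (mul_le_of_le_one_left (norm_nonneg _) hc).trans (F.norm_coe_le_norm _)

theorem twistedKoopman_eq_smul {φ : C(K, K)} {F : C(K, ℂ)} {μ : ℂ}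
    (hF : ∀ x, F (φ x) = μ * F x) (c : ℂ) : twistedKoopman φ c F = (c * μ) • F := by
  ext x
  simp [hF, mul_assoc]

theorem eqOn_birkhoffAverage_twistedKoopman {φ : C(K, K)} {s : Set K} (hs : Set.MapsTo φ s s)
    {c : ℂ} {F : C(K, ℂ)} (hF : ∀ x ∈ s, c * F (φ x) = F x) {N : ℕ} (hN : N ≠ 0) :
    Set.EqOn ⇑(birkhoffAverage ℂ (twistedKoopman φ c) id N F) F s := by
  have hiter : ∀ n, Set.EqOn ((twistedKoopman φ c)^[n] F) F s := by
    intro n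
    induction n with
    | zero => exact Set.eqOn_refl _ _
    | succ n ih =>
      intro x hx
      rw [iterate_succ_apply', twistedKoopman_apply, ih (hs hx), hF x hx]
  intro x hx
  simp [birkhoffAverage, birkhoffSum, hiter _ hx, hN]

end Koopman

theorem DiscreteSpectrum.exists_eigenfunction_extension {K : Type*} [TopologicalSpace K]
    [CompactSpace K] [T2Space K] {φ : K → K} (hφ : Continuous φ) (hds : DiscreteSpectrum φ)
    {s : Set K} (hs : IsClosed s) (hφs : Set.MapsTo φ s s) {lam : ℂ} (hlam : ‖lam‖ = 1)
    (f : C(s, ℂ)) (hf : ∀ x : s, f ⟨φ x, hφs x.2⟩ = lam * f x) :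
    ∃ F : C(K, ℂ), (∀ x, F (φ x) = lam * F x) ∧ ∀ x : s, F x = f x := by
  have hlam0 : lam ≠ 0 := norm_ne_zero_iff.1 (hlam ▸ one_ne_zero)
  set S := twistedKoopman ⟨φ, hφ⟩ lam⁻¹
  have hS : LipschitzWith 1 S := lipschitzWith_twistedKoopman _ (by simp [hlam])
  obtain ⟨G, rfl⟩ := ContinuousMap.exists_restrict_eq hs f
  obtain ⟨F, hF⟩ : G ∈ S.birkhoffConvergent := by
    refine (S.isClosed_birkhoffConvergent hS).closure_subset_iff.2
      (Submodule.span_le.2 ?_) (hds G)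
    rintro H ⟨-, μ, -, hH⟩
    exact S.mem_birkhoffConvergent_of_apply_eq_smul hS (twistedKoopman_eq_smul hH _)
  have hGs : ∀ x ∈ s, lam⁻¹ * G (φ x) = G x := fun x hx => by
    simpa [inv_mul_eq_iff_eq_mul₀ hlam0] using hf ⟨x, hx⟩
  refine ⟨F, fun x => ?_, fun x => ?_⟩
  · rw [← inv_mul_eq_iff_eq_mul₀ hlam0]
    exact DFunLike.congr_fun (S.apply_eq_of_tendsto_birkhoffAverage hS hF) x
  · refine tendsto_nhds_unique ((continuous_eval_const (x : K)).tendsto F |>.comp hF) ?_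
    refine tendsto_const_nhds.congr' ((eventually_ne_atTop 0).mono fun N hN => ?_)
    exact (eqOn_birkhoffAverage_twistedKoopman hφs hGs hN x.2).symm

theorem exists_isOpen_forall_fiber_eigenfunction {K L : Type*} [TopologicalSpace K]
    [TopologicalSpace L] {φ : K → K} {q : K → L} (hq : Continuous q)
    (hqsurj : Function.Surjective q) (hinv : ∀ x, q (φ x) = q x)
    (hmax : ∀ f : C(K, ℂ), (∀ x, f (φ x) = f x) → ∃ g : C(L, ℂ), f = g.comp ⟨q, hq⟩)
    {lam : ℂ} (hlam : ‖lam‖ = 1) (F : C(K, ℂ)) (hF : ∀ x, F (φ x) = lam * F x)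
    {x₀ : K} (hx₀ : F x₀ ≠ 0) :
    ∃ U : Set L, IsOpen U ∧ q x₀ ∈ U ∧ ∀ l' ∈ U,
      ∃ g : C(↥(q ⁻¹' {l'}), ℂ), g ≠ 0 ∧
        ∀ x : ↥(q ⁻¹' {l'}), g (fiberMap φ q hinv l' x) = lam * g x := by
  obtain ⟨g, hg⟩ := hmax ⟨fun x => (‖F x‖ : ℂ), by fun_prop⟩ fun x => by simp [hF, hlam]
  have hgq : ∀ x, g (q x) = ‖F x‖ := fun x => (DFunLike.congr_fun hg x).symm
  refine ⟨{l' | g l' ≠ 0}, isOpen_ne_fun g.continuous continuous_const, by simpa [hgq] using hx₀,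
    fun l' hl' => ⟨F.restrict _, fun h => ?_, fun x => hF x⟩⟩
  obtain ⟨x, rfl⟩ := hqsurj l'
  exact hl' (by simpa [hgq] using DFunLike.congr_fun h ⟨x, rfl⟩)

theorem eigenfunction_extension_and_pointSpectrum_lsc_general
    {K L : Type*} [TopologicalSpace K] [CompactSpace K] [T2Space K]
    [TopologicalSpace L] [T2Space L]
    (φ : K → K) (hφ : Continuous φ) (hds : DiscreteSpectrum φ)
    (q : K → L) (hq : Continuous q) (hqsurj : Function.Surjective q)
    (hinv : ∀ x, q (φ x) = q x)
    (hmax : ∀ f : C(K, ℂ), (∀ x, f (φ x) = f x) ↔ ∃ g : C(L, ℂ), f = g.comp ⟨q, hq⟩)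
    (l : L) (lam : ℂ) (hlam : ‖lam‖ = 1)
    (f : C(↥(q ⁻¹' {l}), ℂ)) (hf0 : f ≠ 0)
    (hfeig : ∀ x : ↥(q ⁻¹' {l}), f (fiberMap φ q hinv l x) = lam * f x) :
    (∃ ftil : C(K, ℂ), (∀ x : K, ftil (φ x) = lam * ftil x) ∧
        ∀ x : ↥(q ⁻¹' {l}), ftil ↑x = f x) ∧
      ∃ U : Set L, IsOpen U ∧ l ∈ U ∧ ∀ l' ∈ U,
        ∃ g : C(↥(q ⁻¹' {l'}), ℂ), g ≠ 0 ∧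
          ∀ x : ↥(q ⁻¹' {l'}), g (fiberMap φ q hinv l' x) = lam * g x := by
  obtain ⟨ftil, heig, hext⟩ := hds.exists_eigenfunction_extension hφ
    (isClosed_singleton.preimage hq) (fun x hx => (hinv x).trans hx) hlam f hfeig
  obtain ⟨x₀, hx₀⟩ := DFunLike.ne_iff.1 hf0
  obtain ⟨U, hU, hx₀U, hUeig⟩ := exists_isOpen_forall_fiber_eigenfunction hq hqsurj hinv
    (fun F => (hmax F).1) hlam ftil heig (x₀ := x₀) (by rwa [hext])
  exact ⟨⟨ftil, heig, hext⟩, U, hU, x₀.2 ▸ hx₀U, hUeig⟩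

/-- Let `(K, φ)` be a topological dynamical system with discrete spectrum,
`q : K → L` a projection onto its maximal trivial factor, `l ∈ L`, `λ` a unimodular complex
number and `f` a nonzero continuous eigenfunction on the fiber `K_l` with `f ∘ φ_l = λ f`.
Then `f` extends to an eigenfunction `f̃ ∈ C(K)` with `f̃ ∘ φ = λ f̃`, and there is an open
neighborhood `U` of `l` such that `λ` is an eigenvalue of the Koopman operator of every fiber
system `(K_{l'}, φ_{l'})` with `l' ∈ U`; i.e. the point spectrum bundle of `(K, φ)` is
lower-semicontinuous. -/
theorem eigenfunction_extension_and_pointSpectrum_lsc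
    {K L : Type*} [TopologicalSpace K] [CompactSpace K] [T2Space K]
    [TopologicalSpace L] [CompactSpace L] [T2Space L]
    (φ : K → K) (hφ : Continuous φ) (hds : DiscreteSpectrum φ)
    (q : K → L) (hq : Continuous q) (hqsurj : Function.Surjective q)
    (hinv : ∀ x, q (φ x) = q x)
    (hmax : ∀ f : C(K, ℂ), (∀ x, f (φ x) = f x) ↔ ∃ g : C(L, ℂ), f = g.comp ⟨q, hq⟩)
    (l : L) (lam : ℂ) (hlam : ‖lam‖ = 1)
    (f : C(↥(q ⁻¹' {l}), ℂ)) (hf0 : f ≠ 0)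
    (hfeig : ∀ x : ↥(q ⁻¹' {l}), f (fiberMap φ q hinv l x) = lam * f x) :
    (∃ ftil : C(K, ℂ), (∀ x : K, ftil (φ x) = lam * ftil x) ∧
        ∀ x : ↥(q ⁻¹' {l}), ftil ↑x = f x) ∧
      ∃ U : Set L, IsOpen U ∧ l ∈ U ∧ ∀ l' ∈ U,
        ∃ g : C(↥(q ⁻¹' {l'}), ℂ), g ≠ 0 ∧
          ∀ x : ↥(q ⁻¹' {l'}), g (fiberMap φ q hinv l' x) = lam * g x :=
  eigenfunction_extension_and_pointSpectrum_lsc_general φ hφ hds q hq hqsurj hinv hmax l lam hlam f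
    hf0 hfeig
end
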